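/- A sequence x over a finite alphabet has bounded abelian complexity if and only if x is C-balanced for some positive integer C. -/
import Mathlib


/-- Number of (possibly overlapping) occurrences of `w` as a factor of `u`. -/
def countOcc {A : Type*} [DecidableEq A] (u w : List A) : ℕ :=
  (List.range (u.length + 1 - w.length)).countP
    (fun i => decide ((u.drop i).take w.length = w))

/-- `k`-abelian equivalence: equal occurrence counts for all words of length between 1 and `k`. -/
def kAbEq {A : Type*} [DecidableEq A] (k : ℕ) (u v : List A) : Prop :=
  ∀ w : List A, 1 ≤ w.length → w.length ≤ k → countOcc u w = countOcc v w

/-- The length-`n` factor of the sequence `x` starting at position `i`. -/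
def factorAt {A : Type*} (x : ℕ → A) (i n : ℕ) : List A :=
  (List.range n).map (fun j => x (i + j))

/-- The set of length-`n` factors of the sequence `x`. -/
def Fac {A : Type*} (x : ℕ → A) (n : ℕ) : Set (List A) :=
  {u | ∃ i, u = factorAt x i n}

/-- `u` is a factor of the sequence `x`. -/
def IsFactor {A : Type*} (x : ℕ → A) (u : List A) : Prop :=
  ∃ i, u = factorAt x i u.length

/-- The complete invariant of `k`-abelian equivalence: all counts of factors of
length between `1` and `k`. -/
def kProfile {A : Type*} [DecidableEq A] (k : ℕ) (u : List A) : List A → ℕ :=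
  fun w => if 1 ≤ w.length ∧ w.length ≤ k then countOcc u w else 0

/-- The complete invariant of exact `k`-abelian equivalence (for same-length words):
all counts of factors of length exactly `k`. -/
def exProfile {A : Type*} [DecidableEq A] (k : ℕ) (u : List A) : List A → ℕ :=
  fun w => if w.length = k then countOcc u w else 0

/-- The `k`-abelian complexity: number of length-`n` factors of `x` up to `k`-abelian
equivalence. -/
noncomputable def kAbComplexity {A : Type*} [DecidableEq A] (x : ℕ → A) (k n : ℕ) : ℕ :=
  Set.ncard (kProfile k '' Fac x n)

/-- The exact `k`-abelian complexity: number of length-`n` factors of `x` up to exact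
`k`-abelian equivalence. -/
noncomputable def exAbComplexity {A : Type*} [DecidableEq A] (x : ℕ → A) (k n : ℕ) : ℕ :=
  Set.ncard (exProfile k '' Fac x n)

/-- The abelian complexity: number of Parikh vectors of length-`n` factors of `x`. -/
noncomputable def abComplexity {A : Type*} [DecidableEq A] (x : ℕ → A) (n : ℕ) : ℕ :=
  Set.ncard ((fun (u : List A) (a : A) => u.count a) '' Fac x n)

/-- The factor complexity of `x`. -/
noncomputable def factorComplexity {A : Type*} (x : ℕ → A) (n : ℕ) : ℕ :=
  Set.ncard (Fac x n)

lemma countOcc_singleton {A : Type*} [DecidableEq A] (u : List A) (a : A) :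
    countOcc u [a] = u.count a := by
  have key : ∀ v : List A, (List.range v.length).countP
      (fun i => decide ((v.drop i).take 1 = [a])) = v.count a := by
    intro v
    induction v with
    | nil => rfl
    | cons b t ih =>
      rw [List.length_cons, List.range_succ_eq_map, List.countP_cons, List.countP_map]
      simp only [List.drop_succ_cons, Function.comp_def] at *
      rw [ih, List.count_cons]
      have : ((b :: t).drop 0).take 1 = [b] := by
        cases t <;> rfl
      rw [this]
      by_cases h : b = a <;> simp [h]
  simpa [countOcc] using key u

lemma factorAt_length {A : Type*} (x : ℕ → A) (i n : ℕ) :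
    (factorAt x i n).length = n := by simp [factorAt]

lemma factorAt_succ_left {A : Type*} (x : ℕ → A) (i n : ℕ) :
    factorAt x i (n+1) = x i :: factorAt x (i+1) n := by
  unfold factorAt
  rw [List.range_succ_eq_map]
  simp [List.map_map, Function.comp_def, Nat.add_assoc, Nat.add_comm 1]

lemma factorAt_succ_right {A : Type*} (x : ℕ → A) (i n : ℕ) :
    factorAt x i (n+1) = factorAt x i n ++ [x (i+n)] := by
  unfold factorAt
  rw [List.range_succ]
  simp

lemma Fac_finite {A : Type*} [Fintype A] (x : ℕ → A) (n : ℕ) :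
    (Fac x n).Finite := by
  apply Set.Finite.subset (List.finite_length_eq (α := A) n)
  rintro u ⟨i, rfl⟩
  exact factorAt_length x i n

lemma count_step {A : Type*} [DecidableEq A] (x : ℕ → A) (a : A) (i n : ℕ) :
    |((factorAt x (i+1) n).count a : ℤ) - ((factorAt x i n).count a : ℤ)| ≤ 1 := by
  cases n with
  | zero => simp [factorAt]
  | succ m =>
    have h1 := factorAt_succ_left x i m
    have h2 := factorAt_succ_right x (i+1) m
    have ecnt : ∀ b : A, ((List.count a [b] : ℕ) : ℤ) = if b = a then 1 else 0 := by
      intro b; by_cases h : b = a <;> simp [List.count_cons, h]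
    have e1 : ((factorAt x i (m+1)).count a : ℤ)
        = ((factorAt x (i+1) m).count a : ℤ) + (if x i = a then 1 else 0) := by
      rw [h1, List.count_cons]
      push_cast [beq_iff_eq]
      rfl
    have e2 : ((factorAt x (i+1) (m+1)).count a : ℤ)
        = ((factorAt x (i+1) m).count a : ℤ) + (if x (i+1+m) = a then 1 else 0) := by
      rw [h2, List.count_append]
      push_cast
      rw [ecnt]
    rw [e1, e2]
    have hr : ((factorAt x (i+1) m).count a : ℤ) + (if x (i+1+m) = a then 1 else 0)
        - (((factorAt x (i+1) m).count a : ℤ) + (if x i = a then 1 else 0))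
        = (if x (i+1+m) = a then (1:ℤ) else 0) - (if x i = a then 1 else 0) := by ring
    rw [hr]
    by_cases h : x (i+1+m) = a <;> by_cases h' : x i = a <;> simp [h, h']

lemma discrete_ivt_up (f : ℕ → ℤ) (hf : ∀ k, f (k+1) ≤ f k + 1) :
    ∀ i j m, i ≤ j → f i ≤ m → m ≤ f j → ∃ k, f k = m := by
  intro i j
  induction j with
  | zero =>
    intro m hij h1 h2
    have : i = 0 := Nat.le_zero.mp hij
    subst this
    exact ⟨0, le_antisymm h1 h2⟩
  | succ j ih =>
    intro m hij h1 h2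
    rcases Nat.lt_or_ge i (j+1) with hlt | hge
    · have hij' : i ≤ j := Nat.lt_succ_iff.mp hlt
      rcases le_or_gt m (f j) with h | h
      · exact ih m hij' h1 h
      · have := hf j
        exact ⟨j+1, le_antisymm (by omega) h2⟩
    · have heq : i = j+1 := le_antisymm hij hge
      subst heq
      exact ⟨j+1, le_antisymm h1 h2⟩

lemma discrete_ivt (f : ℕ → ℤ) (hf : ∀ k, |f (k+1) - f k| ≤ 1) :
    ∀ i j m, f i ≤ m → m ≤ f j → ∃ k, f k = m := by
  intro i j m h1 h2
  rcases Nat.le_total i j with h | h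
  · exact discrete_ivt_up f (fun k => by have := hf k; rw [abs_le] at this; omega) i j m h h1 h2
  · obtain ⟨k, hk⟩ := discrete_ivt_up (fun k => -f k)
      (fun k => by have := hf k; rw [abs_le] at this; omega)
      j i (-m) h (show -f j ≤ -m by omega) (show -m ≤ -f i by omega)
    have hk' : -f k = -m := hk
    exact ⟨k, by omega⟩

lemma factorAt_mem_Fac {A : Type*} (x : ℕ → A) (i n : ℕ) :
    factorAt x i n ∈ Fac x n := ⟨i, rfl⟩

lemma mem_Fac_isFactor {A : Type*} (x : ℕ → A) {u : List A} {n : ℕ} (h : u ∈ Fac x n) :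
    IsFactor x u ∧ u.length = n := by
  obtain ⟨i, rfl⟩ := h
  refine ⟨⟨i, ?_⟩, factorAt_length x i n⟩
  rw [factorAt_length]

/-- A sequence over a finite alphabet has bounded abelian complexity if and only if it is
`C`-balanced for some positive integer `C`. -/
theorem bounded_abComplexity_iff_balanced {A : Type*} [Fintype A] [DecidableEq A]
    (x : ℕ → A) :
    (∃ C : ℕ, ∀ n, abComplexity x n ≤ C) ↔
      (∃ C : ℕ, 0 < C ∧ ∀ u v : List A, IsFactor x u → IsFactor x v →
        u.length = v.length →
        ∀ a : A, |(countOcc u [a] : ℤ) - (countOcc v [a] : ℤ)| ≤ C) := by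
  constructor
  · rintro ⟨C, hC⟩
    refine ⟨max C 1, by positivity, ?_⟩
    rintro u v ⟨iu, hu⟩ ⟨iv, hv⟩ hlen a
    set n := u.length with hn
    have hvn : v.length = n := hlen.symm
    rw [countOcc_singleton, countOcc_singleton]
    -- the counting function along the sequence
    set f : ℕ → ℤ := fun i => ((factorAt x i n).count a : ℤ) with hf
    have hfu : (u.count a : ℤ) = f iu := by rw [hu]
    have hfv : (v.count a : ℤ) = f iv := by rw [hv, hvn]
    rw [hfu, hfv]
    -- the set of values of counts
    set P : Set (A → ℕ) := (fun (u : List A) (a : A) => u.count a) '' Fac x n with hP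
    have hPfin : P.Finite := ((Fac_finite x n).image _)
    set S : Set ℕ := (fun g => g a) '' P with hS
    have hSfin : S.Finite := hPfin.image _
    have hstep : ∀ k, |f (k+1) - f k| ≤ 1 := fun k => count_step x a k n
    -- all intermediate values are attained
    have key : ∀ i j : ℕ, ∀ m : ℤ, f i ≤ m → m ≤ f j → m.toNat ∈ S := by
      intro i j m h1 h2
      obtain ⟨k, hk⟩ := discrete_ivt f hstep i j m h1 h2
      refine ⟨(fun b => (factorAt x k n).count b), ⟨factorAt x k n, factorAt_mem_Fac x k n, rfl⟩, ?_⟩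
      simp only
      have hk' : ((factorAt x k n).count a : ℤ) = m := hk
      omega
    -- cardinality bound
    have main : ∀ i j : ℕ, f i ≤ f j → f j - f i ≤ C - 1 := by
      intro i j hij
      have hsub : ∀ m : ℤ, m ∈ Finset.Icc (f i) (f j) → m.toNat ∈ S := by
        intro m hm
        rw [Finset.mem_Icc] at hm
        exact key i j m hm.1 hm.2
      have hnn : (0:ℤ) ≤ f i := by positivity
      have hinj : Set.InjOn (fun m : ℤ => m.toNat) (Finset.Icc (f i) (f j)) := by
        intro m1 h1 m2 h2 h
        simp only [Finset.coe_Icc, Set.mem_Icc] at h1 h2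
        have h' : m1.toNat = m2.toNat := h
        omega
      have hcard : (Finset.Icc (f i) (f j)).card ≤ S.ncard := by
        have := Set.ncard_le_ncard_of_injOn (fun m : ℤ => m.toNat)
          (fun m hm => hsub m (by simpa using hm)) hinj hSfin
        rwa [Set.ncard_coe_finset] at this
      have h1 : S.ncard ≤ P.ncard := by
        rw [hS]; exact Set.ncard_image_le hPfin
      have h2 : P.ncard ≤ C := hC n
      rw [Int.card_Icc] at hcard
      omega
    rcases le_total (f iu) (f iv) with h | h
    · have := main iu iv h
      have h1 : (1:ℤ) ≤ max C 1 := by exact_mod_cast le_max_right C 1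
      have h2 : (C:ℤ) ≤ max C 1 := by exact_mod_cast le_max_left C 1
      rw [abs_le]; omega
    · have := main iv iu h
      have h1 : (1:ℤ) ≤ max C 1 := by exact_mod_cast le_max_right C 1
      have h2 : (C:ℤ) ≤ max C 1 := by exact_mod_cast le_max_left C 1
      rw [abs_le]; omega
  · rintro ⟨C, hCpos, hbal⟩
    refine ⟨(2*C+1)^(Fintype.card A), fun n => ?_⟩
    set u0 : List A := factorAt x 0 n with hu0
    set P : Set (A → ℕ) := (fun (u : List A) (a : A) => u.count a) '' Fac x n with hP
    have hPfin : P.Finite := ((Fac_finite x n).image _)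
    -- bound each coordinate
    have hbd : ∀ g ∈ P, ∀ a : A, u0.count a ≤ g a + C ∧ g a + C - u0.count a ≤ 2*C := by
      rintro g ⟨u, hu, rfl⟩ a
      obtain ⟨hfac, hlen⟩ := mem_Fac_isFactor x hu
      have h0 : IsFactor x u0 ∧ u0.length = n := mem_Fac_isFactor x (factorAt_mem_Fac x 0 n)
      have := hbal u u0 hfac h0.1 (by rw [hlen, h0.2]) a
      rw [countOcc_singleton, countOcc_singleton, abs_le] at this
      show u0.count a ≤ u.count a + C ∧ u.count a + C - u0.count a ≤ 2*C
      constructor <;> omega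
    set F : (A → ℕ) → (A → Fin (2*C+1)) :=
      fun g a => ⟨min (g a + C - u0.count a) (2*C), by omega⟩ with hF
    have hinj : Set.InjOn F P := by
      intro g hg g' hg' h
      funext a
      have h1 := hbd g hg a
      have h2 := hbd g' hg' a
      have := congrFun h a
      rw [hF] at this
      simp only [Fin.mk.injEq] at this
      omega
    calc P.ncard = (F '' P).ncard := (Set.ncard_image_of_injOn hinj).symm
    _ ≤ (Set.univ : Set (A → Fin (2*C+1))).ncard :=
        Set.ncard_le_ncard (Set.subset_univ _) Set.finite_univ
    _ = (2*C+1)^(Fintype.card A) := by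
        rw [Set.ncard_univ, Nat.card_eq_fintype_card, Fintype.card_fun, Fintype.card_fin]
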